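/- arXiv:2205.02466 — 2 statements merged into one kernel-verified Lean document; each statement's English description precedes it below -/
import Mathlib

section
/- Fix d ≥ 1, ε > 0 and let e_1 ∈ S^{d-1} be the first standard basis vector. Let f : ℝ^d → ℝ≥0 be an ε-indistinguishable probability density whose associated random variable 𝓡 satisfies E[𝓡] = e_1. Then there exists an ε-DP local randomizer R' from S^{d-1} to ℝ^d such that ∫ u dR'(v)(u) = v and ∫ ‖u − v‖² dR'(v)(u) = E[‖𝓡 − e_1‖²] for every v ∈ S^{d-1}. -/
/-!
Move `𝓡` to `v` by the reflection `ρ_v` of `ℝ^d` that swaps `e₁` and `v`. Being a linear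
isometry, `ρ_v` preserves Lebesgue measure, so `R'(v)` has density `f ∘ ρ_v`; at any point `u`
the densities of `R'(v)` and `R'(v')` are values of `f` at two points of norm `‖u‖`, hence
differ by a factor at most `e^ε`. Linearity sends the mean `e₁` to `v`, and isometry turns
`‖ρ_v u - v‖ = ‖ρ_v (u - e₁)‖` into `‖u - e₁‖`.
-/

open MeasureTheory ProbabilityTheory Real Filter
open scoped ENNReal NNReal InnerProductSpace Topology

noncomputable section

/-- Euclidean space `ℝ^d`. -/
abbrev Euc (d : ℕ) : Type := EuclideanSpace ℝ (Fin d)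

/-- The unit sphere `S^{d-1}` as a subset of `ℝ^d`. -/
def Sph (d : ℕ) : Set (Euc d) := Metric.sphere 0 1

/-- An `ε`-DP local randomizer from the unit sphere to a measurable space `Y`:
a measurable family of probability measures satisfying
`R(v)(E) ≤ e^ε · R(v')(E)` for all `v, v'` on the sphere and measurable `E`. -/
def IsDPRandomizer {Y : Type} [MeasurableSpace Y] (d : ℕ) (ε : ℝ)
    (R : Euc d → Measure Y) : Prop :=
  (∀ v ∈ Sph d, IsProbabilityMeasure (R v)) ∧
  (∀ E : Set Y, MeasurableSet E → Measurable fun v => R v E) ∧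
  ∀ v ∈ Sph d, ∀ v' ∈ Sph d, ∀ E : Set Y, MeasurableSet E →
    R v E ≤ ENNReal.ofReal (Real.exp ε) * R v' E

/-- The uniform (normalized surface) probability measure on the unit sphere of `ℝ^d`,
viewed as a measure on the ambient space. -/
def uniformSphere (d : ℕ) : Measure (Euc d) :=
  (((volume : Measure (Euc d)).toSphere Set.univ)⁻¹ •
    ((volume : Measure (Euc d)).toSphere)).map Subtype.val

/-- The worst-case mean squared error `err_n(A, R)` of a protocol, where the `n`
reports `R(v_1), …, R(v_n)` are independent. -/
def errN {Y : Type} [MeasurableSpace Y] (d n : ℕ)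
    (A : (Fin n → Y) → Euc d) (R : Euc d → Measure Y) : ℝ :=
  ⨆ v : Fin n → (Metric.sphere (0 : Euc d) 1),
    ∫ z, ‖A z - (n : ℝ)⁻¹ • ∑ i, (v i : Euc d)‖ ^ 2
      ∂(Measure.pi fun i => R (v i))

/-- Additive (averaging) aggregation `AdA`. -/
def adA (d n : ℕ) (z : Fin n → Euc d) : Euc d := (n : ℝ)⁻¹ • ∑ i, z i

/-- The error of a canonical randomizer, `err(R) = sup_{v ∈ S^{d-1}} E‖R(v) − v‖²`. -/
def errC (d : ℕ) (R : Euc d → Measure (Euc d)) : ℝ :=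
  ⨆ v : Metric.sphere (0 : Euc d) 1, ∫ u, ‖u - (v : Euc d)‖ ^ 2 ∂(R v)

/-- The incomplete Beta function `B(x; a, b) = ∫_0^x t^{a-1}(1-t)^{b-1} dt`. -/
def incBeta (x a b : ℝ) : ℝ := ∫ t in (0:ℝ)..x, t ^ (a - 1) * (1 - t) ^ (b - 1)

/-- The normalization constant `m` of `PrivUnit(p, γ)`, with `a = (d-1)/2` and
`τ = (1+γ)/2`:  `m = ((1-γ²)^a/(2^{d-2}(d-1)))·(p/(B(a,a)−B(τ;a,a)) + (1−p)/B(τ;a,a))`. -/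
def puNorm (d : ℕ) (p γ : ℝ) : ℝ :=
  ((1 - γ ^ 2) ^ (((d : ℝ) - 1) / 2) / (2 ^ ((d : ℝ) - 2) * ((d : ℝ) - 1))) *
    (p / (incBeta 1 (((d : ℝ) - 1) / 2) (((d : ℝ) - 1) / 2) -
          incBeta ((1 + γ) / 2) (((d : ℝ) - 1) / 2) (((d : ℝ) - 1) / 2)) +
     (1 - p) / incBeta ((1 + γ) / 2) (((d : ℝ) - 1) / 2) (((d : ℝ) - 1) / 2))

/-- The spherical cap `{u : ⟨u, v⟩ ≥ γ}`. -/
def cap (d : ℕ) (γ : ℝ) (v : Euc d) : Set (Euc d) := {u | γ ≤ ⟪u, v⟫_ℝ}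

/-- The mixture measure of `PrivUnit(p, γ)` before normalization: with probability `p`
draw from the uniform measure conditioned on the cap `{u : ⟨u,v⟩ ≥ γ}`, and with
probability `1 − p` from the uniform measure conditioned on its complement. -/
def privUnitRaw (d : ℕ) (p γ : ℝ) (v : Euc d) : Measure (Euc d) :=
  ENNReal.ofReal p • (uniformSphere d)[|cap d γ v] +
    ENNReal.ofReal (1 - p) • (uniformSphere d)[|(cap d γ v)ᶜ]

/-- The `PrivUnit(p, γ)` randomizer of Bhowmick et al.: the mixture above
rescaled by `1/m`. -/
def privUnit (d : ℕ) (p γ : ℝ) (v : Euc d) : Measure (Euc d) :=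
  (privUnitRaw d p γ v).map (fun u => (puNorm d p γ)⁻¹ • u)

/-- The first standard basis vector `e_1` of `ℝ^d` (zero if `d = 0`). -/
def eFirst (d : ℕ) : Euc d :=
  if h : 0 < d then EuclideanSpace.single (⟨0, h⟩ : Fin d) (1 : ℝ) else 0

/-- The reflection of `u` in coordinates aligned with `v`: it keeps the component
of `u` along `v` and negates the orthogonal component.  For `v = e_1` this is
`u^- = (u_1, −u_2, …, −u_d)`. -/
def reflAlong (d : ℕ) (v u : Euc d) : Euc d := (2 * ⟪u, v⟫_ℝ) • v - u

/-- A density is `ε`-indistinguishable if `f(u₁) ≤ e^ε f(u₂)` whenever `‖u₁‖ = ‖u₂‖`. -/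
def IsIndistDensity (d : ℕ) (ε : ℝ) (f : Euc d → ℝ≥0) : Prop :=
  ∀ u1 u2 : Euc d, ‖u1‖ = ‖u2‖ → (f u1 : ℝ) ≤ Real.exp ε * (f u2 : ℝ)

/-- The measure on `ℝ^d` with density `f` with respect to Lebesgue measure. -/
def densMeasure (d : ℕ) (f : Euc d → ℝ≥0) : Measure (Euc d) :=
  volume.withDensity fun u => (f u : ℝ≥0∞)

/-- The uniform probability measure on the sphere of radius `C` in `ℝ^d`. -/
def uniformSphereR (d : ℕ) (C : ℝ) : Measure (Euc d) :=
  (uniformSphere d).map (fun u => C • u)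

/-- The standard normal density `φ`. -/
def stdGaussPDF (x : ℝ) : ℝ := (Real.sqrt (2 * Real.pi))⁻¹ * Real.exp (-(x ^ 2) / 2)

/-- The standard normal CDF `Φ`. -/
def stdGaussCDF (x : ℝ) : ℝ := ((gaussianReal 0 1) (Set.Iic x)).toReal

/-- The inverse standard normal CDF `Φ⁻¹`. -/
def probit : ℝ → ℝ := Function.invFun stdGaussCDF

/-- The Gaussian measure `N(0, σ² I)` on `ℝ^d` with iid `N(0, σ²)` coordinates. -/
def isoGaussian (d : ℕ) (σ2 : ℝ≥0) : Measure (Euc d) :=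
  (Measure.pi fun _ : Fin d => gaussianReal 0 σ2).map
    (EuclideanSpace.equiv (Fin d) ℝ).symm

/-- The distribution of the coefficient `α` in `PrivUnitG(p, q)` in dimension `d`:
a mixture of `N(0, 1/d)` conditioned on `{≥ γ}` (weight `p`) and on `{< γ}`
(weight `1 − p`), where `γ = σ·Φ⁻¹(q)` and `σ = 1/√d`. -/
def alphaMix (d : ℕ) (p q : ℝ) : Measure ℝ :=
  ENNReal.ofReal p •
      (gaussianReal 0 (d : ℝ≥0)⁻¹)[|Set.Ici (Real.sqrt (d : ℝ)⁻¹ * probit q)] +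
    ENNReal.ofReal (1 - p) •
      (gaussianReal 0 (d : ℝ≥0)⁻¹)[|Set.Iio (Real.sqrt (d : ℝ)⁻¹ * probit q)]

/-- The normalization constant `m = σ·φ(γ/σ)·(p/(1−q) − (1−p)/q)` of `PrivUnitG(p, q)`,
with `σ = 1/√d` and `γ = σ·Φ⁻¹(q)`. -/
def mG (d : ℕ) (p q : ℝ) : ℝ :=
  Real.sqrt (d : ℝ)⁻¹ * stdGaussPDF (probit q) * (p / (1 - q) - (1 - p) / q)

/-- The `PrivUnitG(p, q)` randomizer: on input `v`, output `(α v + V^⊥)/m` where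
`α ~ alphaMix d p q` and `V^⊥ = W − ⟨W, v⟩ v` with `W ~ N(0, I/d)` independent of `α`;
`V^⊥` is Gaussian with covariance `σ²(I − v vᵀ)`. -/
def privUnitG (d : ℕ) (p q : ℝ) (v : Euc d) : Measure (Euc d) :=
  ((alphaMix d p q).prod (isoGaussian d (d : ℝ≥0)⁻¹)).map
    (fun aw => (mG d p q)⁻¹ • (aw.1 • v + (aw.2 - ⟪aw.2, v⟫_ℝ • v)))

/-- The optimal error `err*_{ε,d}(PrivUnitG)`: the infimum of the error of
`PrivUnitG(p, q)` over `p, q ∈ (0,1)` with `(p/(1−p))·(q/(1−q)) ≤ e^ε`. -/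
def errStarG (d : ℕ) (ε : ℝ) : ℝ :=
  sInf {e : ℝ | ∃ p q : ℝ, p ∈ Set.Ioo (0:ℝ) 1 ∧ q ∈ Set.Ioo (0:ℝ) 1 ∧
    p / (1 - p) * (q / (1 - q)) ≤ Real.exp ε ∧ e = errC d (privUnitG d p q)}

/-- The CDF of the first coordinate of a uniform point on `S^{d-1}`. -/
def sphereCDF (d : ℕ) (t : ℝ) : ℝ :=
  ((uniformSphere d) {u | ⟪u, eFirst d⟫_ℝ ≤ t}).toReal

/-- `γ₂` such that `q = P(W_1 ≤ γ₂)` for `W` uniform on the sphere. -/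
def gammaOf (d : ℕ) (q : ℝ) : ℝ := Function.invFun (sphereCDF d) q

/-- `PrivUnit(p, q)`: the `PrivUnit(p, γ₂)` randomizer with `γ₂` chosen so that
`q = P(W_1 ≤ γ₂)`. -/
def privUnitPQ (d : ℕ) (p q : ℝ) : Euc d → Measure (Euc d) :=
  privUnit d p (gammaOf d q)

/-- The optimal error `err*_{ε,d}(PrivUnit)`: the infimum of the error of
`PrivUnit(p, q)` over `p, q ∈ (0,1)` with `(p/(1−p))·(q/(1−q)) ≤ e^ε`. -/
def errStarU (d : ℕ) (ε : ℝ) : ℝ :=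
  sInf {e : ℝ | ∃ p q : ℝ, p ∈ Set.Ioo (0:ℝ) 1 ∧ q ∈ Set.Ioo (0:ℝ) 1 ∧
    p / (1 - p) * (q / (1 - q)) ≤ Real.exp ε ∧ e = errC d (privUnitPQ d p q)}

/-- `C_{ε,d} = (ε/d)·err*_{ε,d}(PrivUnitG)`. -/
def Ced (d : ℕ) (ε : ℝ) : ℝ := ε / (d : ℝ) * errStarG d ε

section Reflection

variable {E : Type*} [NormedAddCommGroup E] [InnerProductSpace ℝ E]

lemma reflection_orthogonal_singleton_apply (w u : E) :
    (ℝ ∙ w)ᗮ.reflection u = u - (2 * (⟪w, u⟫_ℝ / ‖w‖ ^ 2)) • w := by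
  rw [Submodule.reflection_orthogonal_apply, Submodule.reflection_singleton_apply, neg_sub,
    RCLike.ofReal_real_eq_id, id, two_smul, two_mul, add_smul]

variable [MeasurableSpace E] [BorelSpace E] [SecondCountableTopology E]

lemma Measurable.reflection_orthogonal_singleton {α : Type*} [MeasurableSpace α] {w u : α → E}
    (hw : Measurable w) (hu : Measurable u) :
    Measurable fun x => (ℝ ∙ w x)ᗮ.reflection (u x) := by
  simp_rw [reflection_orthogonal_singleton_apply]
  exact hu.sub ((measurable_const.mul ((hw.inner hu).div (hw.norm.pow_const 2))).smul hw)

end Reflection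

section Transport

variable {E : Type*} [NormedAddCommGroup E] [InnerProductSpace ℝ E]
  [MeasurableSpace E] [BorelSpace E]

/-- When `‖e‖ = ‖v‖`, the reflection in `(e - v)ᗮ` swaps `e` and `v`
(`Submodule.reflection_sub`). -/
def reflectTo (μ : Measure E) (e v : E) : Measure E :=
  μ.map ((ℝ ∙ (e - v))ᗮ.reflection)

lemma isProbabilityMeasure_reflectTo (μ : Measure E) [IsProbabilityMeasure μ] (e v : E) :
    IsProbabilityMeasure (reflectTo μ e v) :=
  Measure.isProbabilityMeasure_map (LinearIsometryEquiv.continuous _).aemeasurable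

lemma measurable_reflectTo_apply [SecondCountableTopology E] (μ : Measure E) [SFinite μ]
    (e : E) {s : Set E} (hs : MeasurableSet s) :
    Measurable fun v => reflectTo μ e v s := by
  have hR : Measurable fun p : E × E => (ℝ ∙ (e - p.1))ᗮ.reflection p.2 :=
    (measurable_const.sub measurable_fst).reflection_orthogonal_singleton measurable_snd
  simp_rw [reflectTo, Measure.map_apply (LinearIsometryEquiv.continuous _).measurable hs]
  exact measurable_measure_prodMk_left (hR hs)

lemma integral_reflectTo_eq_integral_comp {G : Type*} [NormedAddCommGroup G] [NormedSpace ℝ G]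
    (μ : Measure E) (e v : E) (g : E → G) :
    ∫ u, g u ∂(reflectTo μ e v) = ∫ u, g ((ℝ ∙ (e - v))ᗮ.reflection u) ∂μ :=
  ((ℝ ∙ (e - v))ᗮ.reflection).toMeasurableEquiv.measurableEmbedding.integral_map g

lemma integral_id_reflectTo [CompleteSpace E] {μ : Measure E} {e v : E}
    (hmean : ∫ u, u ∂μ = e) (hv : ‖e‖ = ‖v‖) : ∫ u, u ∂(reflectTo μ e v) = v := by
  rw [integral_reflectTo_eq_integral_comp]
  refine (((ℝ ∙ (e - v))ᗮ.reflection).toContinuousLinearEquiv.integral_comp_comm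
    (fun u => u)).trans ?_
  simpa [hmean] using Submodule.reflection_sub hv

lemma integral_norm_sub_reflectTo {G : Type*} [NormedAddCommGroup G] [NormedSpace ℝ G]
    (μ : Measure E) {e v : E} (hv : ‖e‖ = ‖v‖) (g : ℝ → G) :
    ∫ u, g ‖u - v‖ ∂(reflectTo μ e v) = ∫ u, g ‖u - e‖ ∂μ := by
  rw [integral_reflectTo_eq_integral_comp]
  congr with u
  have hsub : (ℝ ∙ (e - v))ᗮ.reflection u - v = (ℝ ∙ (e - v))ᗮ.reflection (u - e) := by
    rw [map_sub, Submodule.reflection_sub hv]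
  rw [hsub, LinearIsometryEquiv.norm_map]

variable [FiniteDimensional ℝ E]

lemma map_withDensity_linearIsometryEquiv (g : E → ℝ≥0∞) (T : E ≃ₗᵢ[ℝ] E) :
    (volume.withDensity g).map T = volume.withDensity (g ∘ T.symm) := by
  ext s hs
  rw [Measure.map_apply T.continuous.measurable hs,
    withDensity_apply _ (hs.preimage T.continuous.measurable), withDensity_apply _ hs,
    ← T.measurePreserving.setLIntegral_comp_preimage_emb
      T.toMeasurableEquiv.measurableEmbedding (g ∘ T.symm) s]
  simp

lemma reflectTo_withDensity_le {g : E → ℝ≥0∞} {c : ℝ≥0∞} (hc : c ≠ ∞)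
    (hg : ∀ u₁ u₂ : E, ‖u₁‖ = ‖u₂‖ → g u₁ ≤ c * g u₂) (e v v' : E) :
    reflectTo (volume.withDensity g) e v ≤ c • reflectTo (volume.withDensity g) e v' := by
  rw [reflectTo, reflectTo, map_withDensity_linearIsometryEquiv,
    map_withDensity_linearIsometryEquiv, ← withDensity_smul' c _ hc]
  exact withDensity_mono (ae_of_all _ fun u => hg _ _ (by simp))

end Transport

lemma IsIndistDensity.coe_le_ofReal_exp_mul {d : ℕ} {ε : ℝ} {f : Euc d → ℝ≥0}
    (hf : IsIndistDensity d ε f) (u₁ u₂ : Euc d) (hu : ‖u₁‖ = ‖u₂‖) :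
    (f u₁ : ℝ≥0∞) ≤ ENNReal.ofReal (Real.exp ε) * f u₂ := by
  rw [← ENNReal.ofReal_coe_nnreal, ← ENNReal.ofReal_coe_nnreal (p := f u₂),
    ← ENNReal.ofReal_mul (Real.exp_pos ε).le]
  exact ENNReal.ofReal_le_ofReal (hf u₁ u₂ hu)

lemma norm_eFirst {d : ℕ} (hd : 0 < d) : ‖eFirst d‖ = 1 := by
  simp [eFirst, hd]

theorem stmt5_general (d : ℕ) (hd : 1 ≤ d) (ε : ℝ)
    (f : Euc d → ℝ≥0) (hind : IsIndistDensity d ε f)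
    (hprob : IsProbabilityMeasure (densMeasure d f))
    (hmean : ∫ u, u ∂(densMeasure d f) = eFirst d) :
    ∃ R' : Euc d → Measure (Euc d), IsDPRandomizer d ε R' ∧
      ∀ v ∈ Sph d, (∫ u, u ∂(R' v) = v ∧
        ∫ u, ‖u - v‖ ^ 2 ∂(R' v) = ∫ u, ‖u - eFirst d‖ ^ 2 ∂(densMeasure d f)) := by
  have hnorm : ∀ v ∈ Sph d, ‖eFirst d‖ = ‖v‖ := fun v hv => by
    rw [norm_eFirst hd, mem_sphere_zero_iff_norm.mp hv]
  refine ⟨reflectTo (densMeasure d f) (eFirst d),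
    ⟨fun v _ => isProbabilityMeasure_reflectTo _ _ _,
      fun s hs => measurable_reflectTo_apply _ _ hs, fun v _ v' _ s _ => ?_⟩,
    fun v hv => ⟨integral_id_reflectTo hmean (hnorm v hv),
      integral_norm_sub_reflectTo _ (hnorm v hv) (· ^ 2)⟩⟩
  exact reflectTo_withDensity_le ENNReal.ofReal_ne_top hind.coe_le_ofReal_exp_mul _ v v' s

/-- Extension Lemma.
Given an `ε`-indistinguishable probability density `f` on `ℝ^d` whose associated
random variable has mean `e_1`, there is an `ε`-DP local randomizer `R'` that is
unbiased and has, at every input `v ∈ S^{d-1}`, mean squared error equal to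
`E‖𝓡 − e_1‖²`. -/
theorem stmt5 (d : ℕ) (hd : 1 ≤ d) (ε : ℝ) (hε : 0 < ε)
    (f : Euc d → ℝ≥0) (hind : IsIndistDensity d ε f)
    (hprob : IsProbabilityMeasure (densMeasure d f))
    (hmean : ∫ u, u ∂(densMeasure d f) = eFirst d) :
    ∃ R' : Euc d → Measure (Euc d), IsDPRandomizer d ε R' ∧
      ∀ v ∈ Sph d, (∫ u, u ∂(R' v) = v ∧
        ∫ u, ‖u - v‖ ^ 2 ∂(R' v) = ∫ u, ‖u - eFirst d‖ ^ 2 ∂(densMeasure d f)) :=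
  stmt5_general d hd ε f hind hprob hmean

end
end

section
/- There is a universal constant c > 0 such that the following holds for all d ≥ 2, γ ≥ 0, p ∈ [0,1] and ε_G > 0. Let U ~ N(0, 1/d) and suppose P(U ≥ γ) ≥ e^{−ε_G}. Let α be the random variable that with probability p is distributed as U conditioned on {U ≥ γ} and with probability 1−p is distributed as U conditioned on {U < γ}. Then E[α²] ≤ c·(γ² + (ε_G + log d)/d). -/
/-!
For `X ~ N(0, v)`, Gaussian integration by parts `E[X g(X)] = v E[g'(X)]` with `g(x) = (x - γ)⁺`
gives `E[X (X - γ); X ≥ γ] = v P(X ≥ γ)`. As `x² ≤ 2x(x - γ) + γ²`, this bounds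
`E[X² | X ≥ γ] ≤ γ² + 2v`; as `x(x - γ) ≤ x²` on `{x ≥ γ}` when `γ ≥ 0`, it also gives
`E[X²; X ≥ γ] ≥ v P(X ≥ γ)`, i.e. `E[X² | X < γ] ≤ v`. Hence every mixture of the two conditioned
laws has second moment at most `γ² + 2/d`, and `2 ≤ 3 log d` for `d ≥ 2`.
-/

open MeasureTheory ProbabilityTheory Real Filter
open scoped ENNReal NNReal InnerProductSpace Topology

noncomputable section

open Set

namespace MeasureTheory

variable {α : Type*} [MeasurableSpace α] {μ ν : Measure α} {s : Set α} {f : α → ℝ} {C : ℝ}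

lemma Integrable.cond (hf : Integrable f μ) (hs : μ s ≠ 0) : Integrable f μ[|s] :=
  hf.restrict.smul_measure (ENNReal.inv_ne_top.2 hs)

lemma integral_cond_le_of_setIntegral_le (hs : μ s ≠ 0) (hs' : μ s ≠ ∞)
    (h : ∫ x in s, f x ∂μ ≤ C * μ.real s) : ∫ x, f x ∂μ[|s] ≤ C := by
  have hpos : 0 < μ.real s := ENNReal.toReal_pos hs hs'
  rw [ProbabilityTheory.cond, integral_smul_measure, ENNReal.toReal_inv, ← measureReal_def,
    smul_eq_mul, inv_mul_le_iff₀ hpos]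
  linarith

lemma integral_mixture_le {p : ℝ} (hp : p ∈ Icc (0 : ℝ) 1) (hμ : Integrable f μ)
    (hν : Integrable f ν) (hμC : ∫ x, f x ∂μ ≤ C) (hνC : ∫ x, f x ∂ν ≤ C) :
    ∫ x, f x ∂(ENNReal.ofReal p • μ + ENNReal.ofReal (1 - p) • ν) ≤ C := by
  rw [integral_add_measure (hμ.smul_measure ENNReal.ofReal_ne_top)
    (hν.smul_measure ENNReal.ofReal_ne_top), integral_smul_measure, integral_smul_measure,
    ENNReal.toReal_ofReal hp.1, ENNReal.toReal_ofReal (sub_nonneg.2 hp.2), smul_eq_mul, smul_eq_mul]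
  nlinarith [hp.1, hp.2]

end MeasureTheory

namespace ProbabilityTheory

variable {m : ℝ} {v : ℝ≥0}

lemma hasDerivAt_gaussianPDFReal (m : ℝ) (v : ℝ≥0) (x : ℝ) :
    HasDerivAt (gaussianPDFReal m v) (-((x - m) / v) * gaussianPDFReal m v x) x := by
  have hexponent : HasDerivAt (fun y : ℝ => -(y - m) ^ 2 / (2 * v)) (-((x - m) / v)) x :=
    ((((hasDerivAt_id' x).sub_const m).pow 2).neg.div_const (2 * (v : ℝ))).congr_deriv
      (by simp only [Nat.cast_ofNat, mul_one]; ring)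
  exact (hexponent.exp.const_mul (√(2 * π * v))⁻¹).congr_deriv (by rw [gaussianPDFReal]; ring)

lemma integrable_gaussianPDFReal_mul {f : ℝ → ℝ} (hf : Integrable f (gaussianReal m v)) :
    Integrable fun x => gaussianPDFReal m v x * f x := by
  rcases eq_or_ne v 0 with rfl | hv
  · simp
  rw [gaussianReal_of_var_ne_zero _ hv, integrable_withDensity_iff_integrable_smul'
    (measurable_gaussianPDF m v) (ae_of_all _ fun _ => gaussianPDF_lt_top)] at hf
  simpa using hf

lemma setIntegral_gaussianReal_eq_setIntegral_mul (hv : v ≠ 0) (f : ℝ → ℝ) (s : Set ℝ) :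
    ∫ x in s, f x ∂gaussianReal m v = ∫ x in s, gaussianPDFReal m v x * f x := by
  rw [gaussianReal_of_var_ne_zero _ hv, restrict_withDensity',
    integral_withDensity_eq_integral_toReal_smul (measurable_gaussianPDF m v)
      (ae_of_all _ fun _ => gaussianPDF_lt_top)]
  simp

lemma measureReal_gaussianReal_eq_setIntegral (hv : v ≠ 0) (s : Set ℝ) :
    (gaussianReal m v).real s = ∫ x in s, gaussianPDFReal m v x := by
  simpa using setIntegral_gaussianReal_eq_setIntegral_mul (m := m) hv (fun _ => 1) s

lemma integrable_sub_mul_sub_gaussianReal (a b : ℝ) :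
    Integrable (fun x => (x - a) * (x - b)) (gaussianReal m v) :=
  ((memLp_id_gaussianReal' 2 (by simp)).sub (memLp_const a)).integrable_mul
    ((memLp_id_gaussianReal' 2 (by simp)).sub (memLp_const b))

lemma integrable_sub_gaussianReal (a : ℝ) :
    Integrable (fun x => x - a) (gaussianReal m v) :=
  ((memLp_id_gaussianReal 1).integrable le_rfl).sub (integrable_const a)

theorem setIntegral_Ici_sub_mul_sub_gaussianReal (hv : v ≠ 0) (γ : ℝ) :
    ∫ x in Ici γ, (x - m) * (x - γ) ∂gaussianReal m v = v * (gaussianReal m v).real (Ici γ) := by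
  have hmoment : Integrable fun x => gaussianPDFReal m v x * ((x - m) * (x - γ)) :=
    integrable_gaussianPDFReal_mul (integrable_sub_mul_sub_gaussianReal m γ)
  have hderiv : ∀ x, HasDerivAt (fun y => (y - γ) * gaussianPDFReal m v y)
      (gaussianPDFReal m v x - (v : ℝ)⁻¹ * (gaussianPDFReal m v x * ((x - m) * (x - γ)))) x :=
    fun x => (((hasDerivAt_id' x).sub_const γ).mul (hasDerivAt_gaussianPDFReal m v x)).congr_deriv
      (by ring)
  have hderiv_int : IntegrableOn (fun x => gaussianPDFReal m v x -
      (v : ℝ)⁻¹ * (gaussianPDFReal m v x * ((x - m) * (x - γ)))) (Ioi γ) :=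
    ((integrable_gaussianPDFReal m v).sub (hmoment.const_mul _)).integrableOn
  have hint : IntegrableOn (fun x => (x - γ) * gaussianPDFReal m v x) (Ioi γ) := by
    simpa only [mul_comm] using
      (integrable_gaussianPDFReal_mul (integrable_sub_gaussianReal γ)).integrableOn
  -- `(x - γ)` times the density vanishes at `γ` and at `+∞`
  have hftc := integral_Ioi_of_hasDerivAt_of_tendsto' (fun x _ => hderiv x) hderiv_int
    (tendsto_zero_of_hasDerivAt_of_integrableOn_Ioi (fun x _ => hderiv x) hderiv_int hint)
  rw [integral_sub (integrable_gaussianPDFReal m v).integrableOn (hmoment.const_mul _).integrableOn,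
    integral_const_mul, sub_self, zero_mul, sub_zero, sub_eq_zero] at hftc
  rw [setIntegral_gaussianReal_eq_setIntegral_mul hv, measureReal_gaussianReal_eq_setIntegral hv,
    integral_Ici_eq_integral_Ioi, integral_Ici_eq_integral_Ioi, hftc,
    mul_inv_cancel_left₀ (NNReal.coe_ne_zero.2 hv)]

lemma gaussianReal_apply_ne_zero (hv : v ≠ 0) {s : Set ℝ} (hs : volume s ≠ 0) :
    gaussianReal m v s ≠ 0 :=
  fun h => hs (gaussianReal_absolutelyContinuous' m hv h)

lemma integral_sq_gaussianReal_zero : ∫ x, x ^ 2 ∂gaussianReal 0 v = v := by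
  simpa [variance_eq_integral measurable_id'.aemeasurable] using
    variance_fun_id_gaussianReal (μ := 0) (v := v)

lemma integrable_sq_gaussianReal : Integrable (fun x => x ^ 2) (gaussianReal m v) :=
  (memLp_id_gaussianReal' 2 (by simp)).integrable_sq

lemma integrable_mul_sub_gaussianReal (γ : ℝ) :
    Integrable (fun x => x * (x - γ)) (gaussianReal 0 v) := by
  simpa using integrable_sub_mul_sub_gaussianReal (m := 0) (v := v) 0 γ

theorem setIntegral_Ici_sq_gaussianReal_le (hv : v ≠ 0) (γ : ℝ) :
    ∫ x in Ici γ, x ^ 2 ∂gaussianReal 0 v ≤ (γ ^ 2 + 2 * v) * (gaussianReal 0 v).real (Ici γ) := by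
  have hstein := setIntegral_Ici_sub_mul_sub_gaussianReal (m := 0) hv γ
  simp only [sub_zero] at hstein
  have hint := (integrable_mul_sub_gaussianReal (v := v) γ).const_mul 2
  calc ∫ x in Ici γ, x ^ 2 ∂gaussianReal 0 v
      ≤ ∫ x in Ici γ, 2 * (x * (x - γ)) + γ ^ 2 ∂gaussianReal 0 v :=
        setIntegral_mono integrable_sq_gaussianReal.integrableOn
          (hint.add (integrable_const _)).integrableOn fun x => by nlinarith [sq_nonneg (x - γ)]
    _ = (γ ^ 2 + 2 * v) * (gaussianReal 0 v).real (Ici γ) := by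
        rw [integral_add hint.integrableOn (integrable_const _), integral_const_mul, hstein,
          setIntegral_const, smul_eq_mul]
        ring

theorem setIntegral_Iio_sq_gaussianReal_le (hv : v ≠ 0) {γ : ℝ} (hγ : 0 ≤ γ) :
    ∫ x in Iio γ, x ^ 2 ∂gaussianReal 0 v ≤ v * (gaussianReal 0 v).real (Iio γ) := by
  have hstein := setIntegral_Ici_sub_mul_sub_gaussianReal (m := 0) hv γ
  simp only [sub_zero] at hstein
  have hupper : (v : ℝ) * (gaussianReal 0 v).real (Ici γ) ≤ ∫ x in Ici γ, x ^ 2 ∂gaussianReal 0 v :=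
    hstein ▸ setIntegral_mono_on (integrable_mul_sub_gaussianReal γ).integrableOn
      integrable_sq_gaussianReal.integrableOn measurableSet_Ici fun x (hx : γ ≤ x) => by nlinarith
  have htotal := integral_add_compl (measurableSet_Ici (a := γ))
    (integrable_sq_gaussianReal (m := 0) (v := v))
  rw [integral_sq_gaussianReal_zero, compl_Ici] at htotal
  have hprob : (gaussianReal 0 v).real (Iio γ) = 1 - (gaussianReal 0 v).real (Ici γ) := by
    rw [← compl_Ici, probReal_compl_eq_one_sub measurableSet_Ici]
  rw [hprob, mul_one_sub]
  linarith

theorem integral_sq_truncatedGaussianMixture_le (hv : v ≠ 0) {γ : ℝ} (hγ : 0 ≤ γ) {p : ℝ}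
    (hp : p ∈ Icc (0 : ℝ) 1) :
    ∫ a, a ^ 2 ∂(ENNReal.ofReal p • (gaussianReal 0 v)[|Ici γ] +
      ENNReal.ofReal (1 - p) • (gaussianReal 0 v)[|Iio γ]) ≤ γ ^ 2 + 2 * v := by
  have hIci : gaussianReal 0 v (Ici γ) ≠ 0 := gaussianReal_apply_ne_zero hv (by simp)
  have hIio : gaussianReal 0 v (Iio γ) ≠ 0 := gaussianReal_apply_ne_zero hv (by simp)
  refine integral_mixture_le hp (integrable_sq_gaussianReal.cond hIci)
    (integrable_sq_gaussianReal.cond hIio)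
    (integral_cond_le_of_setIntegral_le hIci (measure_ne_top _ _)
      (setIntegral_Ici_sq_gaussianReal_le hv γ))
    (integral_cond_le_of_setIntegral_le hIio (measure_ne_top _ _)
      ((setIntegral_Iio_sq_gaussianReal_le hv hγ).trans ?_))
  gcongr
  nlinarith [sq_nonneg γ, v.coe_nonneg]

end ProbabilityTheory

/-- Lemma: second moment of the truncated Gaussian mixture.
There is a universal constant `c > 0` such that for all `d ≥ 2`, `γ ≥ 0`,
`p ∈ [0,1]` and `ε_G > 0` with `P(U ≥ γ) ≥ e^{−ε_G}` for `U ~ N(0, 1/d)`, the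
mixture `α` of `U | {U ≥ γ}` (weight `p`) and `U | {U < γ}` (weight `1−p`)
satisfies `E[α²] ≤ c·(γ² + (ε_G + log d)/d)`. -/
theorem stmt19 :
    ∃ c : ℝ, 0 < c ∧ ∀ d : ℕ, 2 ≤ d → ∀ γ : ℝ, 0 ≤ γ →
      ∀ p ∈ Set.Icc (0:ℝ) 1, ∀ εG : ℝ, 0 < εG →
      ENNReal.ofReal (Real.exp (-εG)) ≤ (gaussianReal 0 (d : ℝ≥0)⁻¹) (Set.Ici γ) →
      (∫ a, a ^ 2 ∂(ENNReal.ofReal p • (gaussianReal 0 (d : ℝ≥0)⁻¹)[|Set.Ici γ] +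
          ENNReal.ofReal (1 - p) • (gaussianReal 0 (d : ℝ≥0)⁻¹)[|Set.Iio γ])) ≤
        c * (γ ^ 2 + (εG + Real.log d) / d) := by
  refine ⟨3, by norm_num, fun d hd γ hγ p hp εG hεG _ => ?_⟩
  have hv : (d : ℝ≥0)⁻¹ ≠ 0 := inv_ne_zero (Nat.cast_ne_zero.2 (by omega))
  refine (integral_sq_truncatedGaussianMixture_le hv hγ hp).trans ?_
  have hlog : (2 : ℝ) ≤ 3 * (εG + Real.log d) := by
    have := Real.log_le_log two_pos (by exact_mod_cast hd : (2 : ℝ) ≤ d)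
    linarith [Real.log_two_gt_d9]
  have hdiv : 2 * (d : ℝ)⁻¹ ≤ 3 * ((εG + Real.log d) / d) := by
    rw [div_eq_mul_inv, ← mul_assoc]
    exact mul_le_mul_of_nonneg_right hlog (by positivity)
  push_cast
  linarith [sq_nonneg γ]

end
end
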